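/- arXiv:2506.07072 — 4 statements merged into one kernel-verified Lean document; each statement's English description precedes it below -/
import Mathlib

section
/- The EKahan scheme is symmetric: for any real d×d matrix A, any map f : ℝ^d → ℝ^d, any h ∈ ℝ and any x, y ∈ ℝ^d, the relation y = exp(hA)·x + h·φ(hA)·(−(1/2)f(x) + 2f((x+y)/2) − (1/2)f(y)) holds if and only if the relation obtained by exchanging x and y and replacing h by −h holds, i.e. x = exp(−hA)·y + (−h)·φ(−hA)·(−(1/2)f(y) + 2f((y+x)/2) − (1/2)f(x)). -/
/-!
Substituting `τ ↦ 1 - τ` gives `φ(V) = exp V · φ(-V)`, so the scheme reads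
`y = exp(hA) (x + h φ(-hA) g)`, where `g = -f(x)/2 + 2 f((x+y)/2) - f(y)/2` is symmetric in `x`
and `y`. Multiplying by `exp(-hA) = exp(hA)⁻¹` turns this into the scheme with `x`, `y` exchanged
and `h` replaced by `-h`.
-/

open Matrix MeasureTheory

/-- `phi V = ∫₀¹ exp((1-τ)V) dτ`, the integral taken entrywise. -/
noncomputable def phi {d : ℕ} (V : Matrix (Fin d) (Fin d) ℝ) :
    Matrix (Fin d) (Fin d) ℝ :=
  Matrix.of fun i j => ∫ τ in (0:ℝ)..1, NormedSpace.exp ((1 - τ) • V) i j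

section
variable {n : Type*} [Fintype n] [DecidableEq n]

theorem Matrix.continuous_exp_smul (V : Matrix n n ℝ) :
    Continuous fun t : ℝ => NormedSpace.exp (t • V) := by
  let _ : NormedRing (Matrix n n ℝ) := Matrix.linftyOpNormedRing
  let _ : NormedAlgebra ℝ (Matrix n n ℝ) := Matrix.linftyOpNormedAlgebra
  let _ : NormedAlgebra ℚ (Matrix n n ℝ) := Matrix.linftyOpNormedAlgebra
  exact NormedSpace.exp_continuous.comp (continuous_id.smul continuous_const)

theorem Matrix.exp_mul_exp_neg (V : Matrix n n ℝ) :
    NormedSpace.exp V * NormedSpace.exp (-V) = 1 := by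
  rw [← Matrix.exp_add_of_commute _ _ (Commute.refl V).neg_right, add_neg_cancel,
    NormedSpace.exp_zero]

theorem Matrix.eq_mulVec_iff_mulVec_eq {R : Type*} [Semiring R] {E E' : Matrix n n R}
    (hE'E : E' * E = 1) (hEE' : E * E' = 1) {y v : n → R} :
    y = E *ᵥ v ↔ E' *ᵥ y = v := by
  constructor <;> rintro rfl
  · rw [mulVec_mulVec, hE'E, one_mulVec]
  · rw [mulVec_mulVec, hEE', one_mulVec]
end

theorem phi_apply_eq_integral {d : ℕ} (V : Matrix (Fin d) (Fin d) ℝ) (i j : Fin d) :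
    phi V i j = ∫ τ in (0:ℝ)..1, NormedSpace.exp (τ • V) i j := by
  simp only [phi, of_apply]
  simpa using (intervalIntegral.integral_comp_sub_left
    (fun τ : ℝ => NormedSpace.exp (τ • V) i j) 1 (a := 0) (b := 1))

theorem exp_mul_phi_neg {d : ℕ} (V : Matrix (Fin d) (Fin d) ℝ) :
    NormedSpace.exp V * phi (-V) = phi V := by
  ext i j
  have hexp (τ : ℝ) : NormedSpace.exp V * NormedSpace.exp ((1 - τ) • -V) =
      NormedSpace.exp (τ • V) := by
    rw [← Matrix.exp_add_of_commute _ _ ((Commute.refl V).neg_right.smul_right _)]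
    congr 1
    module
  have hintegrable (k : Fin d) : IntervalIntegrable
      (fun τ : ℝ => NormedSpace.exp V i k * NormedSpace.exp ((1 - τ) • -V) k j) volume 0 1 :=
    (continuous_const.mul (((Matrix.continuous_exp_smul (-V)).comp
      (continuous_const.sub continuous_id)).matrix_elem k j)).intervalIntegrable _ _
  calc (NormedSpace.exp V * phi (-V)) i j
      = ∫ τ in (0:ℝ)..1, ∑ k, NormedSpace.exp V i k * NormedSpace.exp ((1 - τ) • -V) k j := by
        simp only [mul_apply, phi, of_apply, ← intervalIntegral.integral_const_mul]
        exact (intervalIntegral.integral_finsetSum fun k _ => hintegrable k).symm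
    _ = phi V i j := by
        simp only [← mul_apply, hexp, phi_apply_eq_integral]

theorem stmt_2 {d : ℕ} (A : Matrix (Fin d) (Fin d) ℝ)
    (f : (Fin d → ℝ) → (Fin d → ℝ)) (h : ℝ) (x y : Fin d → ℝ) :
    (y = NormedSpace.exp (h • A) *ᵥ x +
        h • (phi (h • A) *ᵥ
          ((-(1/2 : ℝ)) • f x + (2 : ℝ) • f ((1/2 : ℝ) • (x + y)) - (1/2 : ℝ) • f y))) ↔
    (x = NormedSpace.exp ((-h) • A) *ᵥ y +
        (-h) • (phi ((-h) • A) *ᵥ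
          ((-(1/2 : ℝ)) • f y + (2 : ℝ) • f ((1/2 : ℝ) • (y + x)) - (1/2 : ℝ) • f x))) := by
  set g := (-(1/2 : ℝ)) • f x + (2 : ℝ) • f ((1/2 : ℝ) • (x + y)) - (1/2 : ℝ) • f y
  have hg : (-(1/2 : ℝ)) • f y + (2 : ℝ) • f ((1/2 : ℝ) • (y + x)) - (1/2 : ℝ) • f x = g := by
    rw [add_comm y x]; module
  rw [hg, neg_smul, ← exp_mul_phi_neg, ← mulVec_mulVec, ← mulVec_smul, ← mulVec_add,
    eq_mulVec_iff_mulVec_eq (by simpa using exp_mul_exp_neg (-(h • A)))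
      (exp_mul_exp_neg (h • A)),
    neg_smul, ← sub_eq_add_neg, eq_sub_iff_add_eq]
  exact eq_comm
end

section
/- Stability/convergence bound for the EKahan scheme: equip ℝ^d with a norm and matrices with the induced operator norm. Let A be a real d×d matrix, f : ℝ^d → ℝ^d Lipschitz with constant L, h > 0, N a natural number, and M_b ≥ 1 a constant such that ‖exp(j h A)‖ ≤ M_b for all 0 ≤ j ≤ N and ‖φ(hA)‖ ≤ M_b, and assume (3/2)·h·L·M_b² < 1. Suppose (x_n)_{0≤n≤N} satisfies the EKahan scheme x_{n+1} = exp(hA)x_n + hφ(hA)K(x_n, x_{n+1}), and (y_n)_{0≤n≤N} satisfies it up to residuals, y_{n+1} = exp(hA)y_n + hφ(hA)K(y_n, y_{n+1}) + r_n with ‖r_n‖ ≤ R for all n, where K(a,b) = −(1/2)f(a) + 2f((a+b)/2) − (1/2)f(b). Then for every 0 ≤ n ≤ N, with D = 1 − (3/2)hLM_b², ‖y_n − x_n‖ ≤ exp(3 L M_b² n h / D) · (M_b‖y_0 − x_0‖ + N·M_b·R)/D. -/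
/-!
Write `e n = y n - x n` and `T = exp(hA)`. Subtracting the two schemes, the defect
`e (k+1) - T e k` equals `h φ(hA) (K(y_k, y_{k+1}) - K(x_k, x_{k+1})) + r_k`, and
`‖K(a, b) - K(a', b')‖ ≤ (3/2) L (‖a - a'‖ + ‖b - b'‖)`. The discrete variation-of-constants
formula `e n = Tⁿ e 0 + ∑_{k<n} T^(n-1-k) (e (k+1) - T e k)`, together with
`Tʲ = exp(jhA)`, bounds `‖e n‖` by an expression that contains `‖e n‖` itself with the factor
`(3/2) h L M_b² < 1`. Absorbing that term leaves `‖e n‖ ≤ a + b ∑_{k<n} ‖e k‖`, and the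
discrete Grönwall inequality concludes.
-/

open MeasureTheory

/-- `phiL V = ∫₀¹ exp((1-τ)V) dτ` for a continuous linear operator `V`. -/
noncomputable def phiL {E : Type*} [NormedAddCommGroup E] [NormedSpace ℝ E]
    (V : E →L[ℝ] E) : E →L[ℝ] E :=
  ∫ τ in (0:ℝ)..1, NormedSpace.exp ((1 - τ) • V)

open Finset

theorem le_mul_one_add_pow_of_le_add_mul_sum {u : ℕ → ℝ} {a b : ℝ} {N : ℕ} (hb : 0 ≤ b)
    (hu : ∀ n ≤ N, u n ≤ a + b * ∑ k ∈ range n, u k) :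
    ∀ n ≤ N, u n ≤ a * (1 + b) ^ n := by
  intro n
  induction n using Nat.strong_induction_on with
  | _ n ih =>
    intro hn
    have hsum : ∑ k ∈ range n, u k ≤ ∑ k ∈ range n, a * (1 + b) ^ k :=
      sum_le_sum fun k hk => ih k (mem_range.mp hk) ((mem_range.mp hk).le.trans hn)
    calc u n ≤ a + b * ∑ k ∈ range n, u k := hu n hn
      _ ≤ a + b * ∑ k ∈ range n, a * (1 + b) ^ k := by gcongr
      _ = a * (1 + b) ^ n := by
        rw [← mul_sum]
        linear_combination a * geom_sum_mul (1 + b) n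

theorem le_mul_exp_of_le_add_mul_sum {u : ℕ → ℝ} {a b : ℝ} {N : ℕ} (ha : 0 ≤ a) (hb : 0 ≤ b)
    (hu : ∀ n ≤ N, u n ≤ a + b * ∑ k ∈ range n, u k) :
    ∀ n ≤ N, u n ≤ a * Real.exp (b * n) := by
  intro n hn
  calc u n ≤ a * (1 + b) ^ n := le_mul_one_add_pow_of_le_add_mul_sum hb hu n hn
    _ ≤ a * Real.exp b ^ n := by
      gcongr
      linarith [Real.add_one_le_exp b]
    _ = a * Real.exp (b * n) := by rw [← Real.exp_nat_mul, mul_comm (n : ℝ)]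

theorem le_div_add_mul_sum_of_le_add_mul_sum_consecutive {u : ℕ → ℝ} {α c : ℝ} {n : ℕ}
    (hc₀ : 0 ≤ c) (hc₁ : c < 1) (hu₀ : 0 ≤ u 0)
    (hu : u n ≤ α + c * ∑ k ∈ range n, (u k + u (k + 1))) :
    u n ≤ α / (1 - c) + 2 * c / (1 - c) * ∑ k ∈ range n, u k := by
  have hshift : ∑ k ∈ range n, (u k + u (k + 1)) = 2 * ∑ k ∈ range n, u k + u n - u 0 := by
    have := sum_range_succ' u n
    rw [sum_range_succ] at this
    rw [sum_add_distrib]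
    linarith
  rw [hshift] at hu
  rw [div_mul_eq_mul_div, ← add_div, le_div_iff₀ (by linarith)]
  nlinarith

theorem eq_pow_smul_add_sum_pow_smul_sub {M E : Type*} [Monoid M] [AddCommGroup E]
    [DistribMulAction M E] (T : M) (e : ℕ → E) (n : ℕ) :
    e n = T ^ n • e 0 + ∑ k ∈ range n, T ^ (n - 1 - k) • (e (k + 1) - T • e k) := by
  induction n with
  | zero => simp
  | succ n ih =>
    have hpow : ∀ k ∈ range n, T ^ (n + 1 - 1 - k) • (e (k + 1) - T • e k) =
        T • T ^ (n - 1 - k) • (e (k + 1) - T • e k) := by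
      intro k hk
      rw [← mul_smul, ← pow_succ', show n - 1 - k + 1 = n + 1 - 1 - k by
        have := mem_range.mp hk; omega]
    rw [sum_range_succ, sum_congr rfl hpow, ← smul_sum, Nat.add_sub_cancel, Nat.sub_self,
      pow_zero, one_smul, pow_succ', mul_smul, ← add_assoc, ← smul_add, ← ih]
    abel

theorem exp_natCast_mul_smul {𝔸 : Type*} [NormedRing 𝔸] [NormedAlgebra ℝ 𝔸] [CompleteSpace 𝔸]
    (j : ℕ) (t : ℝ) (a : 𝔸) : NormedSpace.exp (((j : ℝ) * t) • a) = NormedSpace.exp (t • a) ^ j := by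
  let _ : NormedAlgebra ℚ 𝔸 := NormedAlgebra.restrictScalars ℚ ℝ 𝔸
  rw [mul_smul, Nat.cast_smul_eq_nsmul, NormedSpace.exp_nsmul]

section

variable {𝕜 E : Type*} [NontriviallyNormedField 𝕜] [NormedAddCommGroup E] [NormedSpace 𝕜 E]

theorem norm_le_of_norm_pow_le (T : E →L[𝕜] E) (e : ℕ → E) {M : ℝ} {n : ℕ}
    (hT : ∀ j ≤ n, ‖T ^ j‖ ≤ M) :
    ‖e n‖ ≤ M * ‖e 0‖ + M * ∑ k ∈ range n, ‖e (k + 1) - T (e k)‖ := by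
  rw [eq_pow_smul_add_sum_pow_smul_sub T e n, mul_sum]
  refine (norm_add_le _ _).trans (add_le_add ?_ ((norm_sum_le _ _).trans (sum_le_sum ?_)))
  · exact (T ^ n).le_of_opNorm_le (hT n le_rfl) _
  · intro k hk
    exact (T ^ (n - 1 - k)).le_of_opNorm_le (hT _ (by omega)) _

theorem nonneg_of_norm_sub_le_mul_norm_sub [Nontrivial E] {f : E → E} {L : ℝ}
    (hf : ∀ u v : E, ‖f u - f v‖ ≤ L * ‖u - v‖) : 0 ≤ L := by
  obtain ⟨v, hv⟩ := exists_ne (0 : E)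
  exact nonneg_of_mul_nonneg_left ((norm_nonneg _).trans (hf v 0))
    (by rwa [sub_zero, norm_pos_iff])

theorem norm_le_add_mul_sum_of_norm_sub_le (T : E →L[𝕜] E) (e : ℕ → E) (ρ : ℕ → ℝ)
    {M c : ℝ} {N : ℕ} (hT : ∀ j ≤ N, ‖T ^ j‖ ≤ M) (hc : 0 ≤ c) (hMc : M * c < 1)
    (hρ : ∀ k, 0 ≤ ρ k)
    (hdefect : ∀ k < N, ‖e (k + 1) - T (e k)‖ ≤ c * (‖e k‖ + ‖e (k + 1)‖) + ρ k) :
    ∀ n ≤ N, ‖e n‖ ≤ M * (‖e 0‖ + ∑ k ∈ range N, ρ k) / (1 - M * c) +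
      2 * (M * c) / (1 - M * c) * ∑ k ∈ range n, ‖e k‖ := by
  intro n hn
  have hM : 0 ≤ M := (norm_nonneg _).trans (hT 0 N.zero_le)
  refine le_div_add_mul_sum_of_le_add_mul_sum_consecutive (u := fun k => ‖e k‖)
    (by positivity) hMc (norm_nonneg _) ?_
  have hρn : ∑ k ∈ range n, ρ k ≤ ∑ k ∈ range N, ρ k :=
    sum_le_sum_of_subset_of_nonneg (range_subset_range.mpr hn) fun k _ _ => hρ k
  calc ‖e n‖ ≤ M * ‖e 0‖ + M * ∑ k ∈ range n, ‖e (k + 1) - T (e k)‖ :=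
        norm_le_of_norm_pow_le T e fun j hj => hT j (hj.trans hn)
    _ ≤ M * ‖e 0‖ + M * ∑ k ∈ range n, (c * (‖e k‖ + ‖e (k + 1)‖) + ρ k) := by
        gcongr with k hk
        exact hdefect k ((mem_range.mp hk).trans_le hn)
    _ ≤ M * (‖e 0‖ + ∑ k ∈ range N, ρ k) +
          M * c * ∑ k ∈ range n, (‖e k‖ + ‖e (k + 1)‖) := by
        rw [sum_add_distrib, ← mul_sum]
        linear_combination M * hρn

theorem norm_le_mul_exp_of_norm_sub_le (T : E →L[𝕜] E) (e : ℕ → E) (ρ : ℕ → ℝ)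
    {M c : ℝ} {N : ℕ} (hT : ∀ j ≤ N, ‖T ^ j‖ ≤ M) (hc : 0 ≤ c) (hMc : M * c < 1)
    (hρ : ∀ k, 0 ≤ ρ k)
    (hdefect : ∀ k < N, ‖e (k + 1) - T (e k)‖ ≤ c * (‖e k‖ + ‖e (k + 1)‖) + ρ k) :
    ∀ n ≤ N, ‖e n‖ ≤ M * (‖e 0‖ + ∑ k ∈ range N, ρ k) / (1 - M * c) *
      Real.exp (2 * (M * c) / (1 - M * c) * n) := by
  have hM : 0 ≤ M := (norm_nonneg _).trans (hT 0 N.zero_le)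
  have hρN : 0 ≤ ∑ k ∈ range N, ρ k := sum_nonneg fun k _ => hρ k
  exact le_mul_exp_of_le_add_mul_sum (div_nonneg (by positivity) (by linarith))
    (div_nonneg (by positivity) (by linarith))
    (norm_le_add_mul_sum_of_norm_sub_le T e ρ hT hc hMc hρ hdefect)

end

section

variable {E : Type*} [NormedAddCommGroup E] [NormedSpace ℝ E]

noncomputable def kahanIncrement (f : E → E) (a b : E) : E :=
  (-(1/2 : ℝ)) • f a + (2 : ℝ) • f ((1/2 : ℝ) • (a + b)) - (1/2 : ℝ) • f b

theorem norm_kahanIncrement_sub_le {f : E → E} {L : ℝ} (hL : 0 ≤ L)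
    (hf : ∀ u v : E, ‖f u - f v‖ ≤ L * ‖u - v‖) (a b a' b' : E) :
    ‖kahanIncrement f a b - kahanIncrement f a' b'‖ ≤ 3 / 2 * L * (‖a - a'‖ + ‖b - b'‖) := by
  have hmid : ‖(1/2 : ℝ) • (a + b) - (1/2 : ℝ) • (a' + b')‖ ≤ 1 / 2 * (‖a - a'‖ + ‖b - b'‖) := by
    rw [← smul_sub, add_sub_add_comm, norm_smul, Real.norm_of_nonneg (by norm_num)]
    gcongr
    exact norm_add_le _ _
  have hsplit : kahanIncrement f a b - kahanIncrement f a' b' =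
      (-(1/2 : ℝ)) • (f a - f a') + (2 : ℝ) • (f ((1/2 : ℝ) • (a + b)) - f ((1/2 : ℝ) • (a' + b')))
        - (1/2 : ℝ) • (f b - f b') := by
    simp only [kahanIncrement, smul_sub]
    abel
  rw [hsplit]
  refine (norm_sub_le_of_le (norm_add_le _ _) le_rfl).trans ?_
  simp only [norm_smul, Real.norm_eq_abs, abs_neg, abs_two, abs_of_pos (one_half_pos (α := ℝ))]
  nlinarith [hf a a', hf b b', (hf _ _).trans (mul_le_mul_of_nonneg_left hmid hL)]

theorem norm_sub_sub_le_of_kahan_step (T P : E →L[ℝ] E) {f : E → E} {L h M : ℝ} (hL : 0 ≤ L)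
    (hf : ∀ u v : E, ‖f u - f v‖ ≤ L * ‖u - v‖) (hh : 0 ≤ h) (hP : ‖P‖ ≤ M) {x x' y y' r : E}
    (hx : x' = T x + h • P (kahanIncrement f x x'))
    (hy : y' = T y + h • P (kahanIncrement f y y') + r) :
    ‖y' - x' - T (y - x)‖ ≤ 3 / 2 * h * L * M * (‖y - x‖ + ‖y' - x'‖) + ‖r‖ := by
  have hM : 0 ≤ M := (norm_nonneg P).trans hP
  have hdiff : y' - x' - T (y - x) =
      h • P (kahanIncrement f y y' - kahanIncrement f x x') + r := by
    conv_lhs => rw [hx, hy]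
    rw [map_sub, map_sub, smul_sub]
    abel
  rw [hdiff]
  refine (norm_add_le _ _).trans (add_le_add_left ?_ _)
  calc ‖h • P (kahanIncrement f y y' - kahanIncrement f x x')‖
      ≤ h * (M * ‖kahanIncrement f y y' - kahanIncrement f x x'‖) := by
        rw [norm_smul, Real.norm_of_nonneg hh]
        gcongr
        exact P.le_of_opNorm_le hP _
    _ ≤ h * (M * (3 / 2 * L * (‖y - x‖ + ‖y' - x'‖))) := by
        gcongr
        exact norm_kahanIncrement_sub_le hL hf _ _ _ _
    _ = 3 / 2 * h * L * M * (‖y - x‖ + ‖y' - x'‖) := by ring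

end

theorem stmt_8_general {E : Type*} [NormedAddCommGroup E] [NormedSpace ℝ E]
    [FiniteDimensional ℝ E]
    (A : E →L[ℝ] E) (f : E → E) (L h Mb R : ℝ) (N : ℕ)
    (hf : ∀ u v : E, ‖f u - f v‖ ≤ L * ‖u - v‖)
    (hh : 0 < h)
    (hexp : ∀ j : ℕ, j ≤ N → ‖NormedSpace.exp (((j : ℝ) * h) • A)‖ ≤ Mb)
    (hphi : ‖phiL (h • A)‖ ≤ Mb)
    (hsmall : (3/2) * h * L * Mb ^ 2 < 1)
    (x y r : ℕ → E)
    (hx : ∀ n < N, x (n + 1) =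
      NormedSpace.exp (h • A) (x n) +
        h • phiL (h • A)
          ((-(1/2 : ℝ)) • f (x n) + (2 : ℝ) • f ((1/2 : ℝ) • (x n + x (n + 1))) -
            (1/2 : ℝ) • f (x (n + 1))))
    (hy : ∀ n < N, y (n + 1) =
      NormedSpace.exp (h • A) (y n) +
        h • phiL (h • A)
          ((-(1/2 : ℝ)) • f (y n) + (2 : ℝ) • f ((1/2 : ℝ) • (y n + y (n + 1))) -
            (1/2 : ℝ) • f (y (n + 1))) + r n)
    (hr : ∀ n < N, ‖r n‖ ≤ R) :
    ∀ n ≤ N,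
      ‖y n - x n‖ ≤
        Real.exp (3 * L * Mb ^ 2 * n * h / (1 - (3/2) * h * L * Mb ^ 2)) *
          ((Mb * ‖y 0 - x 0‖ + N * Mb * R) / (1 - (3/2) * h * L * Mb ^ 2)) := by
  have hMb : 0 ≤ Mb := (norm_nonneg _).trans hphi
  have hD : 0 < 1 - (3/2) * h * L * Mb ^ 2 := by linarith
  have hres : ∑ k ∈ range N, ‖r k‖ ≤ N * R := by
    simpa using sum_le_card_nsmul (range N) _ R fun k hk => hr k (mem_range.mp hk)
  rcases subsingleton_or_nontrivial E with hE | hE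
  · intro n _
    rw [Subsingleton.elim (y n) (x n), sub_self, norm_zero]
    have hNR : 0 ≤ (N : ℝ) * R := (sum_nonneg fun k _ => norm_nonneg (r k)).trans hres
    exact mul_nonneg (Real.exp_pos _).le (div_nonneg (by
      nlinarith [mul_nonneg hMb hNR, mul_nonneg hMb (norm_nonneg (y 0 - x 0))]) hD.le)
  have hL : 0 ≤ L := nonneg_of_norm_sub_le_mul_norm_sub hf
  intro n hn
  calc ‖y n - x n‖ ≤ _ :=
        norm_le_mul_exp_of_norm_sub_le (NormedSpace.exp (h • A)) (fun k => y k - x k)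
          (fun k => ‖r k‖) (c := 3 / 2 * h * L * Mb)
          (fun j hj => exp_natCast_mul_smul j h A ▸ hexp j hj) (by positivity) (by linarith)
          (fun k => norm_nonneg (r k))
          (fun k hk => norm_sub_sub_le_of_kahan_step _ _ hL hf hh.le hphi (hx k hk) (hy k hk)) n hn
    _ = Real.exp (3 * L * Mb ^ 2 * n * h / (1 - (3/2) * h * L * Mb ^ 2)) *
          ((Mb * ‖y 0 - x 0‖ + Mb * ∑ k ∈ range N, ‖r k‖) / (1 - (3/2) * h * L * Mb ^ 2)) := by
        rw [mul_comm]
        congr 2 <;> ring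
    _ ≤ _ := by
        gcongr _ * ((_ + ?_) / _)
        linear_combination Mb * hres

theorem stmt_8 {E : Type*} [NormedAddCommGroup E] [NormedSpace ℝ E]
    [FiniteDimensional ℝ E]
    (A : E →L[ℝ] E) (f : E → E) (L h Mb R : ℝ) (N : ℕ)
    (hf : ∀ u v : E, ‖f u - f v‖ ≤ L * ‖u - v‖)
    (hh : 0 < h) (hMb : 1 ≤ Mb)
    (hexp : ∀ j : ℕ, j ≤ N → ‖NormedSpace.exp (((j : ℝ) * h) • A)‖ ≤ Mb)
    (hphi : ‖phiL (h • A)‖ ≤ Mb)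
    (hsmall : (3/2) * h * L * Mb ^ 2 < 1)
    (x y r : ℕ → E)
    (hx : ∀ n < N, x (n + 1) =
      NormedSpace.exp (h • A) (x n) +
        h • phiL (h • A)
          ((-(1/2 : ℝ)) • f (x n) + (2 : ℝ) • f ((1/2 : ℝ) • (x n + x (n + 1))) -
            (1/2 : ℝ) • f (x (n + 1))))
    (hy : ∀ n < N, y (n + 1) =
      NormedSpace.exp (h • A) (y n) +
        h • phiL (h • A)
          ((-(1/2 : ℝ)) • f (y n) + (2 : ℝ) • f ((1/2 : ℝ) • (y n + y (n + 1))) -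
            (1/2 : ℝ) • f (y (n + 1))) + r n)
    (hr : ∀ n < N, ‖r n‖ ≤ R) :
    ∀ n ≤ N,
      ‖y n - x n‖ ≤
        Real.exp (3 * L * Mb ^ 2 * n * h / (1 - (3/2) * h * L * Mb ^ 2)) *
          ((Mb * ‖y 0 - x 0‖ + N * Mb * R) / (1 - (3/2) * h * L * Mb ^ 2)) :=
  stmt_8_general A f L h Mb R N hf hh hexp hphi hsmall x y r hx hy hr
end

section
/- Energy error of the EKahan scheme for a homogeneous cubic Hamiltonian: let M and Q be real d×d matrices with M symmetric and Q skew-symmetric, let C be a symmetric trilinear form on ℝ^d with associated homogeneous cubic U(z) = C(z,z,z) and gradient ∇U determined by ⟨∇U(z), v⟩ = 3C(z,z,v), and let H(z) = (1/2)zᵀMz + U(z). If h ∈ ℝ and x, x' ∈ ℝ^d satisfy the EKahan step x' = exp(hQM)·x + h·φ(hQM)·Q·(−(1/2)∇U(x) + 2∇U((x+x')/2) − (1/2)∇U(x')), then H(x') − H(x) = U(x' − x). -/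
/-! The EKahan step is the exponential integrator for `ż = Q (M z + s)` with the midpoint
discrete gradient `s` held fixed over the step. With `K = h φ(hQM) Q` one has
`x' - x = K (M x + s)`, and the identity `φ(V) - φ(-V) = φ(-V) V φ(V)` together with the
symmetry of `M` and skew-symmetry of `Q` gives `K + Kᵀ + Kᵀ M K = 0`; this makes the change of the
quadratic energy equal to `-⟪s, x' - x⟫`. On the cubic side `⟪s, v⟫ = 3 C(x, x', v)`, and
`U(x') - U(x) - U(x' - x) = 3 C(x, x', x' - x)`. -/

open Matrix MeasureTheory

open NormedSpace

section Phi

-- Any Banach algebra norm on matrices would do: it only serves the integral and the calculus.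
attribute [local instance] Matrix.linftyOpNormedRing Matrix.linftyOpNormedAlgebra

variable {d : ℕ}

theorem continuous_exp_one_sub_smul (V : Matrix (Fin d) (Fin d) ℝ) :
    Continuous fun τ : ℝ => exp ((1 - τ) • V) :=
  exp_continuous.comp ((continuous_const.sub continuous_id).smul continuous_const)

theorem phi_eq_intervalIntegral (V : Matrix (Fin d) (Fin d) ℝ) :
    phi V = ∫ τ in (0:ℝ)..1, exp ((1 - τ) • V) := by
  ext i j
  exact (Matrix.entryLinearMap ℝ ℝ i j).toContinuousLinearMap.intervalIntegral_comp_comm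
    ((continuous_exp_one_sub_smul V).intervalIntegrable 0 1)

theorem mul_phi (B V : Matrix (Fin d) (Fin d) ℝ) :
    B * phi V = ∫ τ in (0:ℝ)..1, B * exp ((1 - τ) • V) := by
  rw [phi_eq_intervalIntegral]
  exact ((ContinuousLinearMap.mul ℝ _ B).intervalIntegral_comp_comm
    ((continuous_exp_one_sub_smul V).intervalIntegrable (μ := volume) 0 1)).symm

theorem phi_mul (V B : Matrix (Fin d) (Fin d) ℝ) :
    phi V * B = ∫ τ in (0:ℝ)..1, exp ((1 - τ) • V) * B := by
  rw [phi_eq_intervalIntegral]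
  exact (((ContinuousLinearMap.mul ℝ _).flip B).intervalIntegral_comp_comm
    ((continuous_exp_one_sub_smul V).intervalIntegrable (μ := volume) 0 1)).symm

theorem SemiconjBy.phi {P X W : Matrix (Fin d) (Fin d) ℝ} (h : SemiconjBy P X W) :
    SemiconjBy P (phi X) (phi W) := by
  rw [SemiconjBy, mul_phi, phi_mul]
  congr 1 with τ : 1
  exact (h.smul_right _).exp_right

theorem phi_mul_self (V : Matrix (Fin d) (Fin d) ℝ) : phi V * V = exp V - 1 := by
  have hderiv (τ : ℝ) : HasDerivAt (fun t : ℝ => -exp ((1 - t) • V))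
      (exp ((1 - τ) • V) * V) τ := by
    have h := ((hasDerivAt_exp_smul_const V (1 - τ)).scomp τ ((hasDerivAt_id τ).const_sub 1)).neg
    simp only [Function.comp_def, neg_smul, one_smul, neg_neg] at h
    exact h
  rw [phi_mul, intervalIntegral.integral_eq_sub_of_hasDerivAt (fun τ _ => hderiv τ)
    (((continuous_exp_one_sub_smul V).mul continuous_const).intervalIntegrable 0 1)]
  simp only [sub_self, zero_smul, exp_zero, sub_zero, one_smul, sub_neg_eq_add]
  abel

theorem phi_neg (V : Matrix (Fin d) (Fin d) ℝ) : phi (-V) = exp (-V) * phi V := by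
  rw [mul_phi, phi_eq_intervalIntegral]
  have hexp (τ : ℝ) : exp (-V) * exp ((1 - τ) • V) = exp ((1 - (1 - τ)) • -V) := by
    rw [← Matrix.exp_add_of_commute _ _ ((Commute.refl V).neg_left.smul_right _)]
    congr 1
    module
  simp_rw [hexp]
  simpa using (intervalIntegral.integral_comp_sub_left (fun τ => exp ((1 - τ) • -V)) 1
    (a := 0) (b := 1)).symm

theorem phi_transpose (V : Matrix (Fin d) (Fin d) ℝ) : (phi V)ᵀ = phi Vᵀ := by
  ext i j
  simp only [phi, transpose_apply, of_apply, ← transpose_smul, Matrix.exp_transpose]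

theorem phi_sub_phi_neg (V : Matrix (Fin d) (Fin d) ℝ) :
    phi V - phi (-V) = phi (-V) * V * phi V := by
  have h : phi (-V) * V = 1 - exp (-V) := by
    rw [← neg_sub, ← phi_mul_self, mul_neg, neg_neg]
  rw [h, sub_mul, one_mul, phi_neg]

end Phi

theorem phi_mul_add_transpose_add_transpose_mul_mul_eq_zero {d : ℕ}
    {M Q : Matrix (Fin d) (Fin d) ℝ} (hM : Mᵀ = M) (hQ : Qᵀ = -Q) :
    phi (Q * M) * Q + (phi (Q * M) * Q)ᵀ + (phi (Q * M) * Q)ᵀ * M * (phi (Q * M) * Q) = 0 := by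
  have hsemiconj : SemiconjBy Q (M * -Q) (-(Q * M)) := by
    simp only [SemiconjBy, mul_neg, neg_mul, mul_assoc]
  have hT : (phi (Q * M) * Q)ᵀ = -(phi (-(Q * M)) * Q) := by
    rw [transpose_mul, phi_transpose, transpose_mul, hM, hQ, neg_mul, hsemiconj.phi.eq]
  have hTMK : (phi (Q * M) * Q)ᵀ * M * (phi (Q * M) * Q) =
      -((phi (Q * M) - phi (-(Q * M))) * Q) := by
    rw [hT, phi_sub_phi_neg]
    simp only [neg_mul, mul_assoc]
  rw [hTMK, hT, sub_mul]
  abel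

theorem dotProduct_mulVec_sub_add_two_mul_dotProduct_eq_zero {R n : Type*} [CommRing R]
    [Fintype n] {M K : Matrix n n R} (hM : Mᵀ = M) (hK : K + Kᵀ + Kᵀ * M * K = 0)
    {x x' s : n → R} (hx' : x' - x = K *ᵥ (M *ᵥ x + s)) :
    x' ⬝ᵥ M *ᵥ x' - x ⬝ᵥ M *ᵥ x + 2 * (s ⬝ᵥ (x' - x)) = 0 := by
  obtain ⟨δ, rfl⟩ : ∃ δ, x' = x + δ := ⟨x' - x, by abel⟩
  rw [add_sub_cancel_left] at hx' ⊢
  set y := M *ᵥ x + s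
  have hsymm (u v : n → R) : u ⬝ᵥ M *ᵥ v = v ⬝ᵥ M *ᵥ u := by
    rw [← dotProduct_transpose_mulVec, hM]
  have hquad : y ⬝ᵥ (K + Kᵀ + Kᵀ * M * K) *ᵥ y = 0 := by rw [hK, zero_mulVec, dotProduct_zero]
  rw [add_mulVec, add_mulVec, dotProduct_add, dotProduct_add, dotProduct_transpose_mulVec,
    ← mulVec_mulVec, ← mulVec_mulVec, dotProduct_transpose_mulVec, ← hx'] at hquad
  simp only [y, add_dotProduct, dotProduct_add, mulVec_add] at hquad ⊢
  linear_combination hquad + hsymm x δ - 2 * dotProduct_comm (M *ᵥ x) δ -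
    dotProduct_comm (M *ᵥ δ) δ

theorem exp_mulVec_add_phi_mulVec_sub {d : ℕ} (Q M : Matrix (Fin d) (Fin d) ℝ)
    (x s : Fin d → ℝ) :
    exp (Q * M) *ᵥ x + phi (Q * M) *ᵥ (Q *ᵥ s) - x = (phi (Q * M) * Q) *ᵥ (M *ᵥ x + s) := by
  rw [← sub_add_cancel (exp (Q * M)) 1, ← phi_mul_self]
  simp only [add_mulVec, mulVec_add, one_mulVec, mulVec_mulVec, mul_assoc]
  abel

theorem LinearMap.trilinear_cube_sub_cube_sub_cube {R V : Type*} [CommRing R] [AddCommGroup V]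
    [Module R V] (C : V →ₗ[R] V →ₗ[R] V →ₗ[R] R)
    (hC1 : ∀ x y z, C x y z = C y x z) (hC2 : ∀ x y z, C x y z = C x z y) (a b : V) :
    C b b b - C a a a - C (b - a) (b - a) (b - a) = 3 * C a b (b - a) := by
  simp only [map_sub, LinearMap.sub_apply]
  linear_combination hC2 b b a + 2 * hC1 b a b - hC1 b a a - hC2 a a b

theorem midpoint_gradient_dotProduct {n : Type*} [Fintype n]
    (C : (n → ℝ) →ₗ[ℝ] (n → ℝ) →ₗ[ℝ] (n → ℝ) →ₗ[ℝ] ℝ) (hC1 : ∀ x y z, C x y z = C y x z)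
    {g : (n → ℝ) → (n → ℝ)} (hg : ∀ z v, g z ⬝ᵥ v = 3 * C z z v) (x x' v : n → ℝ) :
    ((-(1/2 : ℝ)) • g x + (2 : ℝ) • g ((1/2 : ℝ) • (x + x')) - (1/2 : ℝ) • g x') ⬝ᵥ v =
      3 * C x x' v := by
  simp only [add_dotProduct, sub_dotProduct, smul_dotProduct, smul_eq_mul, hg, map_add,
    map_smul, LinearMap.add_apply, LinearMap.smul_apply]
  linear_combination (3/2 : ℝ) * hC1 x' x v

theorem stmt_15 {d : ℕ} (M Q : Matrix (Fin d) (Fin d) ℝ)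
    (hM : Mᵀ = M) (hQ : Qᵀ = -Q)
    (C : (Fin d → ℝ) →ₗ[ℝ] (Fin d → ℝ) →ₗ[ℝ] (Fin d → ℝ) →ₗ[ℝ] ℝ)
    (hC1 : ∀ x y z, C x y z = C y x z)
    (hC2 : ∀ x y z, C x y z = C x z y)
    (U : (Fin d → ℝ) → ℝ) (hU : ∀ z, U z = C z z z)
    (g : (Fin d → ℝ) → (Fin d → ℝ))
    (hg : ∀ z v, g z ⬝ᵥ v = 3 * C z z v)
    (H : (Fin d → ℝ) → ℝ)
    (hH : ∀ z, H z = (1/2 : ℝ) * (z ⬝ᵥ M *ᵥ z) + U z)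
    (h : ℝ) (x x' : Fin d → ℝ)
    (hstep : x' = NormedSpace.exp (h • (Q * M)) *ᵥ x +
        h • (phi (h • (Q * M)) *ᵥ
          (Q *ᵥ ((-(1/2 : ℝ)) • g x + (2 : ℝ) • g ((1/2 : ℝ) • (x + x')) -
            (1/2 : ℝ) • g x')))) :
    H x' - H x = U (x' - x) := by
  set s := (-(1/2 : ℝ)) • g x + (2 : ℝ) • g ((1/2 : ℝ) • (x + x')) - (1/2 : ℝ) • g x'
  have hhQ : (h • Q)ᵀ = -(h • Q) := by rw [transpose_smul, hQ, smul_neg]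
  have hδ : x' - x = (phi ((h • Q) * M) * (h • Q)) *ᵥ (M *ᵥ x + s) := by
    rw [← exp_mulVec_add_phi_mulVec_sub, smul_mul_assoc, smul_mulVec, mulVec_smul, ← hstep]
  have hquad := dotProduct_mulVec_sub_add_two_mul_dotProduct_eq_zero hM
    (phi_mul_add_transpose_add_transpose_mul_mul_eq_zero hM hhQ) hδ
  have hcubic := C.trilinear_cube_sub_cube_sub_cube hC1 hC2 x x'
  rw [← midpoint_gradient_dotProduct C hC1 hg] at hcubic
  rw [hH, hH, hU, hU, hU]
  linear_combination (1/2 : ℝ) * hquad + hcubic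
end

section
/- Symmetry of the multistep (polarized) EKahan scheme: let A be a real d×d matrix, k a positive integer, h ∈ ℝ, and G : (ℝ^d)^{k+1} → ℝ^d a map that is invariant under reversal of its arguments, i.e. G(z_0, z_1, …, z_k) = G(z_k, z_{k−1}, …, z_0) for all arguments. Then a tuple (x_0, x_1, …, x_k) of vectors in ℝ^d satisfies x_k = exp(k h A)·x_0 + k h·φ(k h A)·G(x_0, …, x_k) if and only if the reversed tuple with step −h satisfies x_0 = exp(−k h A)·x_k + (−k h)·φ(−k h A)·G(x_k, …, x_0). In particular, the generalized EKahan scheme with the polarized discrete gradient, which is invariant under reversal of arguments, is a symmetric method. -/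
open Matrix MeasureTheory

/-!
Write `V = k h A` and `c = k h`, so the scheme reads `x_k = e^V x_0 + c φ(V) g`. Multiplying by
`e^{-V}` gives `x_0 = e^{-V} x_k - c e^{-V} φ(V) g`, and `e^{-V} φ(V) = ∫₀¹ e^{-τV} dτ = φ(-V)`
after the substitution `τ ↦ 1 - τ`. Reversal invariance of `G` turns `g = G x` into `G (x ∘ rev)`.
-/

open NormedSpace

theorem Matrix.exp_continuous {m : Type*} [Fintype m] [DecidableEq m] :
    Continuous (exp : Matrix m m ℝ → Matrix m m ℝ) :=
  open scoped Norms.Operator in NormedSpace.exp_continuous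

theorem Matrix.continuous_exp_smul_s17 {m : Type*} [Fintype m] [DecidableEq m] (V : Matrix m m ℝ) :
    Continuous fun t : ℝ => exp (t • V) :=
  Matrix.exp_continuous.comp (continuous_id.smul continuous_const)

theorem Matrix.exp_neg_mul_exp {m : Type*} [Fintype m] [DecidableEq m] (V : Matrix m m ℝ) :
    exp (-V) * exp V = 1 := by
  rw [← Matrix.exp_add_of_commute _ _ (Commute.refl V).neg_left, neg_add_cancel, exp_zero]

theorem Matrix.mul_of_intervalIntegral {m n p : Type*} [Fintype n]
    (M : Matrix m n ℝ) (F : ℝ → Matrix n p ℝ) (a b : ℝ)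
    (hF : ∀ i j, IntervalIntegrable (fun τ => F τ i j) volume a b) :
    M * Matrix.of (fun i j => ∫ τ in a..b, F τ i j) =
      Matrix.of fun i j => ∫ τ in a..b, (M * F τ) i j := by
  ext i j
  simp only [mul_apply, of_apply, ← intervalIntegral.integral_const_mul]
  rw [intervalIntegral.integral_finsetSum fun l _ => (hF l j).const_mul _]

theorem exp_neg_mul_phi {d : ℕ} (V : Matrix (Fin d) (Fin d) ℝ) :
    exp (-V) * phi V = phi (-V) := by
  have hint (i j : Fin d) :
      IntervalIntegrable (fun τ : ℝ => exp ((1 - τ) • V) i j) volume 0 1 :=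
    (((continuous_exp_smul_s17 V).comp (continuous_const.sub continuous_id)).matrix_elem i j
      ).intervalIntegrable 0 1
  have hprod (τ : ℝ) : exp (-V) * exp ((1 - τ) • V) = exp ((1 - (1 - τ)) • -V) := by
    rw [← Matrix.exp_add_of_commute _ _ ((Commute.refl V).neg_left.smul_right _)]
    congr 1
    module
  rw [phi, mul_of_intervalIntegral _ _ _ _ hint]
  ext i j
  simp only [of_apply, hprod, phi]
  rw [intervalIntegral.integral_comp_sub_left (fun σ => exp ((1 - σ) • -V) i j) 1, sub_self,
    sub_zero]

theorem eq_mulVec_add_smul_symm {R n : Type*} [CommRing R] [Fintype n] [DecidableEq n]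
    {E E' P P' : Matrix n n R} (hE : E' * E = 1) (hP : E' * P = P') {c : R} {u v g : n → R}
    (hu : u = E *ᵥ v + c • (P *ᵥ g)) : v = E' *ᵥ u + (-c) • (P' *ᵥ g) := by
  subst hu
  rw [mulVec_add, mulVec_mulVec, hE, one_mulVec, mulVec_smul, mulVec_mulVec, hP, neg_smul]
  abel

theorem exp_phi_step_symm {d : ℕ} {V : Matrix (Fin d) (Fin d) ℝ} {c : ℝ} {u v g : Fin d → ℝ}
    (hu : u = exp V *ᵥ v + c • (phi V *ᵥ g)) : v = exp (-V) *ᵥ u + (-c) • (phi (-V) *ᵥ g) :=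
  eq_mulVec_add_smul_symm (exp_neg_mul_exp V) (exp_neg_mul_phi V) hu

theorem exp_phi_step_iff {d : ℕ} (V : Matrix (Fin d) (Fin d) ℝ) (c : ℝ) (u v g : Fin d → ℝ) :
    u = exp V *ᵥ v + c • (phi V *ᵥ g) ↔ v = exp (-V) *ᵥ u + (-c) • (phi (-V) *ᵥ g) :=
  ⟨exp_phi_step_symm, fun hv => by simpa only [neg_neg] using exp_phi_step_symm hv⟩

theorem stmt_17_general {d k : ℕ}
    (A : Matrix (Fin d) (Fin d) ℝ) (h : ℝ)
    (G : (Fin (k + 1) → (Fin d → ℝ)) → (Fin d → ℝ))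
    (hG : ∀ z : Fin (k + 1) → (Fin d → ℝ), G (z ∘ Fin.rev) = G z)
    (x : Fin (k + 1) → (Fin d → ℝ)) :
    (x (Fin.last k) = NormedSpace.exp (((k : ℝ) * h) • A) *ᵥ x 0 +
        ((k : ℝ) * h) • (phi (((k : ℝ) * h) • A) *ᵥ G x)) ↔
    (x 0 = NormedSpace.exp ((-((k : ℝ) * h)) • A) *ᵥ x (Fin.last k) +
        (-((k : ℝ) * h)) • (phi ((-((k : ℝ) * h)) • A) *ᵥ G (x ∘ Fin.rev))) := by
  rw [hG x, neg_smul _ A]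
  exact exp_phi_step_iff _ _ _ _ _

theorem stmt_17 {d k : ℕ} (hk : 0 < k)
    (A : Matrix (Fin d) (Fin d) ℝ) (h : ℝ)
    (G : (Fin (k + 1) → (Fin d → ℝ)) → (Fin d → ℝ))
    (hG : ∀ z : Fin (k + 1) → (Fin d → ℝ), G (z ∘ Fin.rev) = G z)
    (x : Fin (k + 1) → (Fin d → ℝ)) :
    (x (Fin.last k) = NormedSpace.exp (((k : ℝ) * h) • A) *ᵥ x 0 +
        ((k : ℝ) * h) • (phi (((k : ℝ) * h) • A) *ᵥ G x)) ↔
    (x 0 = NormedSpace.exp ((-((k : ℝ) * h)) • A) *ᵥ x (Fin.last k) +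
        (-((k : ℝ) * h)) • (phi ((-((k : ℝ) * h)) • A) *ᵥ G (x ∘ Fin.rev))) :=
  stmt_17_general A h G hG x
end
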